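/- arXiv:2309.12673 — 4 statements merged into one kernel-verified Lean document; each statement's English description precedes it below -/
import Mathlib

section
/- The sparsemax threshold function satisfies ∑_{μ=1}^M [z_μ − τ(z)]_+ = 1 for all z ∈ ℝ^M, where τ(z) = ((∑_{ν ≤ κ(z)} z_(ν)) − 1)/κ(z), κ(z) = max{k ∈ [M] : 1 + k z_(k) > ∑_{ν ≤ k} z_(ν)}, and z_(1) ≥ z_(2) ≥ ... ≥ z_(M) is the descending rearrangement of z. -/
open scoped BigOperators

open Finset Order

/-!
Let `S` be the sum of the `κ + 1` largest entries and `τ = (S - 1)/(κ + 1)`. The condition at `κ`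
says exactly that `τ` lies below the `(κ + 1)`-th largest entry, hence below all of the `κ + 1`
largest ones; the failure of the condition at `κ + 1` says exactly that the `(κ + 2)`-th largest
entry, hence every later one, is at most `τ`. So the positive parts sum to `S - (κ + 1) τ = 1`.
-/

theorem sum_max_zero_sub_eq_sum_sub_card_nsmul {ι R : Type*} [Fintype ι] [AddCommGroup R]
    [LinearOrder R] [IsOrderedAddMonoid R] (f : ι → R) (s : Finset ι) {t : R}
    (h_ge : ∀ i ∈ s, t ≤ f i) (h_le : ∀ i ∉ s, f i ≤ t) :
    ∑ i, max 0 (f i - t) = ∑ i ∈ s, f i - #s • t := by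
  classical
  rw [← sum_add_sum_compl s,
    sum_congr rfl fun i hi ↦ max_eq_right (sub_nonneg.2 (h_ge i hi)),
    sum_eq_zero fun i hi ↦ max_eq_left (sub_nonpos.2 (h_le i (mem_compl.1 hi))),
    add_zero, sum_sub_distrib, sum_const]

section Threshold

variable {α : Type*} [LinearOrder α] [LocallyFiniteOrderBot α] [SuccOrder α]

theorem sum_Iic_succ_of_not_isMax {M : Type*} [AddCommMonoid M] (f : α → M) {a : α}
    (ha : ¬IsMax a) : ∑ i ∈ Iic (succ a), f i = f (succ a) + ∑ i ∈ Iic a, f i := by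
  rw [Iic_eq_cons_Iio, sum_cons, Iio_succ_eq_Iic_of_not_isMax ha]

theorem card_Iic_succ_of_not_isMax {a : α} (ha : ¬IsMax a) : #(Iic (succ a)) = #(Iic a) + 1 := by
  rw [Iic_eq_cons_Iio, card_cons, Iio_succ_eq_Iic_of_not_isMax ha]

theorem card_mul_le_sum_Iic_sub_one {w : α → ℝ} {a : α} (ha : ¬IsMax a)
    (h : ¬∑ i ∈ Iic (succ a), w i < 1 + #(Iic (succ a)) * w (succ a)) :
    #(Iic a) * w (succ a) ≤ ∑ i ∈ Iic a, w i - 1 := by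
  rw [sum_Iic_succ_of_not_isMax w ha, card_Iic_succ_of_not_isMax ha] at h
  push_cast at h
  linarith

theorem sum_max_zero_sub_threshold_eq_one [Fintype α] {w : α → ℝ} (hw : Antitone w) {κ : α}
    (hκ : ∑ i ∈ Iic κ, w i < 1 + #(Iic κ) * w κ)
    (hκmax : ∀ k, ∑ i ∈ Iic k, w i < 1 + #(Iic k) * w k → k ≤ κ) :
    ∑ i, max 0 (w i - (∑ i ∈ Iic κ, w i - 1) / #(Iic κ)) = 1 := by
  set τ := (∑ i ∈ Iic κ, w i - 1) / #(Iic κ)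
  have hcard : (0 : ℝ) < #(Iic κ) := by
    exact_mod_cast card_pos.2 ⟨κ, mem_Iic.2 le_rfl⟩
  have h_above : ∀ i ∈ Iic κ, τ ≤ w i := by
    have hτ : τ < w κ := by
      rw [div_lt_iff₀ hcard]
      linarith
    exact fun i hi ↦ hτ.le.trans (hw (mem_Iic.1 hi))
  have h_below : ∀ i ∉ Iic κ, w i ≤ τ := by
    intro i hi
    have hκi : κ < i := not_le.1 (mt mem_Iic.2 hi)
    have hnmax : ¬IsMax κ := not_isMax_of_lt hκi
    have hfail := mt (hκmax (succ κ)) (not_le.2 (lt_succ_of_not_isMax hnmax))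
    calc w i ≤ w (succ κ) := hw (succ_le_of_lt hκi)
      _ ≤ τ := by
        rw [le_div_iff₀ hcard, mul_comm]
        exact card_mul_le_sum_Iic_sub_one hnmax hfail
  rw [sum_max_zero_sub_eq_sum_sub_card_nsmul w _ h_above h_below, nsmul_eq_mul,
    mul_div_cancel₀ _ hcard.ne']
  ring

end Threshold

/-- the sparsemax threshold function `τ` satisfies
`∑_{μ=1}^M [z_μ − τ(z)]_+ = 1`.  Here `w` is the descending rearrangement of `z`
(`w i` is the `(i+1)`-th largest entry, 0-indexed), `κ` is the largest index `k`
(0-indexed, representing support size `κ+1`) with `1 + (k+1)·w k > ∑_{ν ≤ k} w ν`,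
and `τ = ((∑_{ν ≤ κ} w ν) − 1)/(κ+1)`. -/
theorem sparsemax_threshold_sums_to_one (M : ℕ) (z : Fin M → ℝ)
    (σ : Equiv.Perm (Fin M)) (w : Fin M → ℝ) (hw : w = z ∘ σ) (hsort : Antitone w)
    (κ : Fin M)
    (hκ : (∑ i ∈ Finset.Iic κ, w i) < 1 + ((κ : ℕ) + 1) * w κ)
    (hκmax : ∀ k : Fin M, (∑ i ∈ Finset.Iic k, w i) < 1 + ((k : ℕ) + 1) * w k → k ≤ κ)
    (τ : ℝ) (hτ : τ = ((∑ i ∈ Finset.Iic κ, w i) - 1) / ((κ : ℕ) + 1)) :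
    ∑ μ, max 0 (z μ - τ) = 1 := by
  have hcard (k : Fin M) : ((#(Iic k) : ℕ) : ℝ) = (k : ℕ) + 1 := by
    simp [Fin.card_Iic]
  simp only [← hcard] at hκ hκmax hτ
  subst hw hτ
  rw [← Equiv.sum_comp σ]
  exact sum_max_zero_sub_threshold_eq_one hsort hκ hκmax
end

section
/- For z ∈ ℝ^M, the vector Sparsemax(z) := [z − τ(z)·1_M]_+ (with τ defined by the threshold condition ∑_μ [z_μ − τ(z)]_+ = 1) lies in the simplex Δ^M and is the unique minimizer of ‖p − z‖² over p ∈ Δ^M. -/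
/-!
Write `p = [z - τ]_+`. Then `p i - z i = -min (z i) τ`, which equals `-τ` wherever `p i > 0`, so
for `q` in the simplex `⟪q - p, p - z⟫ ≥ τ (∑ p i - ∑ q i) = 0`. Expanding `q - z = (q - p) + (p - z)`
then gives `‖q - z‖² ≥ ‖p - z‖² + ‖q - p‖²`, which is minimality and uniqueness at once.
-/

open scoped BigOperators

/-- The probability simplex in `ℝ^M`. -/
def simplex (M : ℕ) : Set (EuclideanSpace ℝ (Fin M)) :=
  {p | (∀ i, 0 ≤ p i) ∧ ∑ i, p i = 1}

open Finset RealInnerProductSpace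

lemma norm_sub_sq_add_norm_sub_sq_le {E : Type*} [SeminormedAddCommGroup E]
    [InnerProductSpace ℝ E] {p q z : E} (h : 0 ≤ ⟪q - p, p - z⟫) :
    ‖q - p‖ ^ 2 + ‖p - z‖ ^ 2 ≤ ‖q - z‖ ^ 2 := by
  have hsplit : q - z = (q - p) + (p - z) := by abel
  rw [hsplit, norm_add_sq_real]
  linarith

lemma mul_max_zero_sub_sub_le {q : ℝ} (hq : 0 ≤ q) (x τ : ℝ) :
    τ * (max 0 (x - τ) - q) ≤ (q - max 0 (x - τ)) * (max 0 (x - τ) - x) := by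
  rcases le_total x τ with hx | hx
  · rw [max_eq_left (by linarith)]
    nlinarith
  · rw [max_eq_right (by linarith)]
    nlinarith

lemma inner_sub_max_zero_sub_nonneg {ι : Type*} [Fintype ι] {z p q : EuclideanSpace ℝ ι} {τ : ℝ}
    (hp : ∀ i, p i = max 0 (z i - τ)) (hp_sum : ∑ i, p i = 1)
    (hq_nonneg : ∀ i, 0 ≤ q i) (hq_sum : ∑ i, q i = 1) :
    0 ≤ ⟪q - p, p - z⟫ :=
  calc 0 = ∑ i, τ * (p i - q i) := by
        rw [← mul_sum, sum_sub_distrib, hp_sum, hq_sum, sub_self, mul_zero]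
    _ ≤ ∑ i, (q i - p i) * (p i - z i) :=
        sum_le_sum fun i _ => by rw [hp i]; exact mul_max_zero_sub_sub_le (hq_nonneg i) _ _
    _ = ⟪q - p, p - z⟫ := by simp [PiLp.inner_apply, mul_comm]

/-- with `τ` the threshold satisfying `∑_μ [z_μ − τ]_+ = 1`, the vector
`Sparsemax(z) = [z − τ·1]_+` lies in the simplex and is the unique minimizer of
`‖p − z‖²` over the simplex. -/
theorem sparsemax_is_projection (M : ℕ) (z : EuclideanSpace ℝ (Fin M)) (τ : ℝ)
    (hτ : ∑ μ, max 0 (z μ - τ) = 1)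
    (p : EuclideanSpace ℝ (Fin M)) (hp : p = fun μ => max 0 (z μ - τ)) :
    p ∈ simplex M ∧
      (∀ q ∈ simplex M, ‖p - z‖ ^ 2 ≤ ‖q - z‖ ^ 2) ∧
      (∀ q ∈ simplex M, ‖q - z‖ ^ 2 = ‖p - z‖ ^ 2 → q = p) := by
  have hpi : ∀ i, p i = max 0 (z i - τ) := congrFun hp
  have hp_mem : p ∈ simplex M :=
    ⟨fun i => (hpi i).symm ▸ le_max_left _ _, by simpa only [hpi] using hτ⟩
  have hpyth : ∀ q ∈ simplex M, ‖q - p‖ ^ 2 + ‖p - z‖ ^ 2 ≤ ‖q - z‖ ^ 2 := fun q hq =>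
    norm_sub_sq_add_norm_sub_sq_le (inner_sub_max_zero_sub_nonneg hpi hp_mem.2 hq.1 hq.2)
  refine ⟨hp_mem, fun q hq => ?_, fun q hq heq => ?_⟩
  · linarith [hpyth q hq, sq_nonneg ‖q - p‖]
  · have hqp : ‖q - p‖ ^ 2 = 0 := le_antisymm (by linarith [hpyth q hq]) (sq_nonneg _)
    exact sub_eq_zero.mp (norm_eq_zero.mp (pow_eq_zero_iff two_ne_zero |>.mp hqp))
end

section
/- Let a, b ∈ ℝ with b > 0 and exp(a + ln b) > −1/e. If c > 0 satisfies a·c + c·ln c − b = 0, then c = b / W₀(exp(a + ln b)), where W₀ is the principal branch of the Lambert W function. -/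
lemma lambert_injOn : Set.InjOn (fun t : ℝ => t * Real.exp t) (Set.Ici (-1)) := by
  apply StrictMonoOn.injOn
  apply strictMonoOn_of_deriv_pos (convex_Ici _)
  · exact (continuous_id.mul Real.continuous_exp).continuousOn
  · intro t ht
    rw [interior_Ici] at ht
    have h : HasDerivAt (fun t : ℝ => t * Real.exp t) (1 * Real.exp t + t * Real.exp t) t :=
      (hasDerivAt_id t).mul (Real.hasDerivAt_exp t)
    rw [h.deriv]
    nlinarith [Real.exp_pos t, ht.out]

/-- if `W₀` is the principal branch of the Lambert W function
(characterized by `W₀(x)·exp(W₀(x)) = x` and `W₀(x) ≥ −1` for `x ≥ −1/e`),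
`b > 0`, `exp(a + ln b) > −1/e`, and `c > 0` satisfies `a·c + c·ln c − b = 0`,
then `c = b / W₀(exp(a + ln b))`. -/
theorem lambert_solution (W₀ : ℝ → ℝ)
    (hW : ∀ x, -1 / Real.exp 1 ≤ x → W₀ x * Real.exp (W₀ x) = x)
    (hW' : ∀ x, -1 / Real.exp 1 ≤ x → -1 ≤ W₀ x)
    (a b c : ℝ) (hb : 0 < b)
    (hdom : -1 / Real.exp 1 < Real.exp (a + Real.log b))
    (hc : 0 < c) (heq : a * c + c * Real.log c - b = 0) :
    c = b / W₀ (Real.exp (a + Real.log b)) := by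
  set x := Real.exp (a + Real.log b) with hx
  have hxle : -1 / Real.exp 1 ≤ x := le_of_lt hdom
  have h1 := hW x hxle
  have h2 := hW' x hxle
  have hbc : b / c = a + Real.log c := by
    field_simp
    linarith
  have hexp : Real.exp (b / c) = Real.exp a * c := by
    rw [hbc, Real.exp_add, Real.exp_log hc]
  have hxval : x = Real.exp a * b := by
    rw [hx, Real.exp_add, Real.exp_log hb]
  have hprod : (b / c) * Real.exp (b / c) = x := by
    rw [hexp, hxval]
    field_simp
  have hbcpos : 0 < b / c := div_pos hb hc
  have heqw : b / c = W₀ x := by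
    apply lambert_injOn (Set.mem_Ici.mpr (by linarith)) (Set.mem_Ici.mpr h2)
    simp only [hprod, h1]
  have hWpos : 0 < W₀ x := heqw ▸ hbcpos
  field_simp at heqw ⊢
  linarith [heqw]
end

section
/- Let Ξ = (ξ_1,...,ξ_M) ∈ ℝ^{d×M}, m := max_ν ‖ξ_ν‖, x ∈ ℝ^d, β > 0, and T(x) := Ξ·Sparsemax(βΞᵀx). Let κ be the support size of Sparsemax(βΞᵀx) and [Ξᵀx]_(κ) the κ-th largest entry of Ξᵀx. Then for any μ ∈ [M], ‖T(x) − ξ_μ‖ ≤ m + √d·m·β·[κ·(max_ν⟨ξ_ν,x⟩ − [Ξᵀx]_(κ)) + 1/β]. -/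
open scoped InnerProductSpace BigOperators

/-- sparse retrieval error bound.  With `T(x) = Ξ·Sparsemax(βΞᵀx)`
(sparsemax given coordinatewise by `[β⟨ξ_ν,x⟩ − τ]_+` with threshold `τ`),
`κ` the support size of `Sparsemax(βΞᵀx)`, `[Ξᵀx]_(κ)` the `κ`-th largest entry of
`Ξᵀx` (the minimum of `⟨ξ_ν,x⟩` over the support), and `m = max_ν ‖ξ_ν‖`,
`‖T(x) − ξ_μ‖ ≤ m + √d·m·β·[κ·(max_ν⟨ξ_ν,x⟩ − [Ξᵀx]_(κ)) + 1/β]`. -/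
theorem sparse_retrieval_error_bound (d M : ℕ)
    (ξ : Fin M → EuclideanSpace ℝ (Fin d)) (x : EuclideanSpace ℝ (Fin d))
    (β : ℝ) (hβ : 0 < β) (μ : Fin M) (τ m : ℝ)
    (hm : m = Finset.univ.sup' ⟨μ, Finset.mem_univ μ⟩ fun ν => ‖ξ ν‖)
    (hτ : ∑ ν, max 0 (β * ⟪ξ ν, x⟫_ℝ - τ) = 1)
    (S : Finset (Fin M)) (hS : S = Finset.univ.filter fun ν => 0 < β * ⟪ξ ν, x⟫_ℝ - τ)
    (hSne : S.Nonempty) (κ : ℕ) (hκ : κ = S.card) :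
    ‖(∑ ν, max 0 (β * ⟪ξ ν, x⟫_ℝ - τ) • ξ ν) - ξ μ‖ ≤
      m + Real.sqrt d * m * β *
        ((κ : ℝ) * ((Finset.univ.sup' ⟨μ, Finset.mem_univ μ⟩ fun ν => ⟪ξ ν, x⟫_ℝ) -
            S.inf' hSne fun ν => ⟪ξ ν, x⟫_ℝ) + 1 / β) := by
  set p : Fin M → ℝ := fun ν => max 0 (β * ⟪ξ ν, x⟫_ℝ - τ) with hp
  have hp0 : ∀ ν, 0 ≤ p ν := fun ν => le_max_left _ _
  have hnorm : ∀ ν, ‖ξ ν‖ ≤ m := by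
    intro ν; rw [hm]; exact Finset.le_sup' (fun ν => ‖ξ ν‖) (Finset.mem_univ ν)
  have hm0 : 0 ≤ m := le_trans (norm_nonneg (ξ μ)) (hnorm μ)
  have hT : ‖∑ ν, p ν • ξ ν‖ ≤ m := by
    calc ‖∑ ν, p ν • ξ ν‖ ≤ ∑ ν, ‖p ν • ξ ν‖ := norm_sum_le _ _
      _ = ∑ ν, p ν * ‖ξ ν‖ := by
          simp [norm_smul, abs_of_nonneg (hp0 _)]
      _ ≤ ∑ ν, p ν * m :=
          Finset.sum_le_sum fun ν _ => mul_le_mul_of_nonneg_left (hnorm ν) (hp0 ν)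
      _ = m := by rw [← Finset.sum_mul, hτ, one_mul]
  have hL : ‖(∑ ν, p ν • ξ ν) - ξ μ‖ ≤ m + m :=
    (norm_sub_le _ _).trans (add_le_add hT (hnorm μ))
  set A := Finset.univ.sup' ⟨μ, Finset.mem_univ μ⟩ fun ν => ⟪ξ ν, x⟫_ℝ with hA
  set B := S.inf' hSne fun ν => ⟪ξ ν, x⟫_ℝ with hB
  obtain ⟨ν0, hν0⟩ := hSne
  have hAB : B ≤ A :=
    le_trans (Finset.inf'_le _ hν0) (Finset.le_sup' (fun ν => ⟪ξ ν, x⟫_ℝ) (Finset.mem_univ ν0))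
  have hκ1 : (1:ℝ) ≤ κ := by
    rw [hκ]; exact_mod_cast Finset.card_pos.mpr ⟨ν0, hν0⟩
  have hC : 1 ≤ β * ((κ:ℝ) * (A - B) + 1/β) := by
    have h1 : 0 ≤ (κ:ℝ) * (A - B) := mul_nonneg (by linarith) (by linarith)
    have h2 : β * (1/β) = 1 := by field_simp
    nlinarith
  rcases Nat.eq_zero_or_pos d with hd | hd
  · subst hd
    have hz : (∑ ν, p ν • ξ ν) - ξ μ = 0 := Subsingleton.elim _ _
    rw [hz, norm_zero]
    have hsq : Real.sqrt 0 = 0 := Real.sqrt_zero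
    have hC0 : 0 ≤ (κ:ℝ) * (A - B) + 1/β := by
      have h5 := mul_nonneg (le_trans zero_le_one hκ1) (sub_nonneg.mpr hAB)
      have h6 : 0 < 1/β := by positivity
      linarith
    nlinarith [mul_nonneg hm0 (mul_nonneg hβ.le hC0)]
  · have hd1 : (1:ℝ) ≤ Real.sqrt d := by
      rw [show (1:ℝ) = Real.sqrt 1 by simp]
      exact Real.sqrt_le_sqrt (by exact_mod_cast hd)
    have key : m ≤ Real.sqrt d * m * β * ((κ:ℝ) * (A - B) + 1/β) := by
      have h3 : m * 1 ≤ m * (β * ((κ:ℝ) * (A - B) + 1/β)) :=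
        mul_le_mul_of_nonneg_left hC hm0
      have h4 : m * (β * ((κ:ℝ) * (A - B) + 1/β)) ≤
          Real.sqrt d * (m * (β * ((κ:ℝ) * (A - B) + 1/β))) := by
        nlinarith [mul_nonneg hm0 (mul_nonneg hβ.le (le_trans (by positivity) (le_trans hC le_rfl)))]
      nlinarith
    linarith
end
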